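/- Let M be a nonstandard model of ZF. If M is rank-extended by a model N of ZF (M ⊆_rank N), then M and N have the same well-founded part. -/
import Mathlib


/-! Common framework: infinitary formulas, models of set theory, satisfaction,
well-founded parts, transitive collapses, satisfaction classes, condensability. -/

/-- Infinitary formulas of `L_{∞,ω}` over binary relation symbols `R` and unary
predicate symbols `P` (negation, existential quantification, and set-indexed
conjunction; variables are indexed by `ℕ`). -/
inductive Fml (R P : Type) : Type 1
  | eq   : ℕ → ℕ → Fml R P
  | rel  : R → ℕ → ℕ → Fml R P
  | pred : P → ℕ → Fml R P
  | not  : Fml R P → Fml R P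
  | ex   : ℕ → Fml R P → Fml R P
  | conj : {ι : Type} → (ι → Fml R P) → Fml R P

namespace Fml

variable {R P : Type}

/-- Free variables of an infinitary formula. -/
def freeVars : Fml R P → Set ℕ
  | eq i j => {i, j}
  | rel _ i j => {i, j}
  | pred _ i => {i}
  | not φ => φ.freeVars
  | ex n φ => φ.freeVars \ {n}
  | conj f => ⋃ i, (f i).freeVars

/-- Genuine `L_{∞,ω}`-formulas: every subformula has finitely many free variables. -/
inductive Finitary : Fml R P → Prop
  | eq (i j : ℕ) : Finitary (eq i j)
  | rel (r : R) (i j : ℕ) : Finitary (rel r i j)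
  | pred (p : P) (i : ℕ) : Finitary (pred p i)
  | not {φ} : Finitary φ → Finitary φ.not
  | ex {φ} (n : ℕ) : Finitary φ → Finitary (ex n φ)
  | conj {ι : Type} {f : ι → Fml R P} : (∀ i, Finitary (f i)) →
      (⋃ i, (f i).freeVars).Finite → Finitary (conj f)

/-- First-order (finitary) formulas. -/
inductive IsFO : Fml R P → Prop
  | eq (i j : ℕ) : IsFO (eq i j)
  | rel (r : R) (i j : ℕ) : IsFO (rel r i j)
  | pred (p : P) (i : ℕ) : IsFO (pred p i)
  | not {φ} : IsFO φ → IsFO φ.not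
  | ex {φ} (n : ℕ) : IsFO φ → IsFO (ex n φ)
  | conj {ι : Type} (hι : Finite ι) {f : ι → Fml R P} : (∀ i, IsFO (f i)) → IsFO (conj f)

/-- The depth of an infinitary formula. -/
noncomputable def depth : Fml R P → Ordinal.{0}
  | eq _ _ => 0
  | rel _ _ _ => 0
  | pred _ _ => 0
  | not φ => φ.depth + 1
  | ex _ φ => φ.depth + 1
  | conj f => ⨆ i, (f i).depth + 1

/-- The subformula relation. -/
inductive Subformula : Fml R P → Fml R P → Prop
  | refl (φ) : Subformula φ φ
  | not {ψ φ} : Subformula ψ φ → Subformula ψ φ.not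
  | ex {ψ φ} (n : ℕ) : Subformula ψ φ → Subformula ψ (ex n φ)
  | conj {ψ : Fml R P} {ι : Type} {f : ι → Fml R P} (i : ι) :
      Subformula ψ (f i) → Subformula ψ (conj f)

/-- Satisfaction of an infinitary formula, with all quantifiers relativized to the
domain `D`. -/
def SatOn {α : Type*} (rels : R → α → α → Prop) (preds : P → α → Prop)
    (D : Set α) : Fml R P → (ℕ → α) → Prop
  | eq i j, v => v i = v j
  | rel r i j, v => rels r (v i) (v j)
  | pred p i, v => preds p (v i)
  | not φ, v => ¬ SatOn rels preds D φ v
  | ex n φ, v => ∃ a ∈ D, SatOn rels preds D φ (Function.update v n a)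
  | conj f, v => ∀ i, SatOn rels preds D (f i) v

end Fml

/-- Formulas of the pure language `{=, ∈}` of set theory. -/
abbrev Fml0 := Fml Unit Empty

/-- Formulas of set theory with one extra unary predicate symbol `S`. -/
abbrev FmlS := Fml Unit Unit

/-- The von Neumann code of a natural number, as a `ZFSet`. -/
noncomputable def natCode : ℕ → ZFSet.{0}
  | 0 => ∅
  | n + 1 => insert (natCode n) (natCode n)

/-- A set-theoretic code of an infinitary formula. -/
noncomputable def fmlCode : Fml0 → ZFSet.{0}
  | .eq i j => .pair (natCode 0) (.pair (natCode i) (natCode j))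
  | .rel _ i j => .pair (natCode 1) (.pair (natCode i) (natCode j))
  | .pred p _ => p.elim
  | .not φ => .pair (natCode 2) (fmlCode φ)
  | .ex n φ => .pair (natCode 3) (.pair (natCode n) (fmlCode φ))
  | .conj f => .pair (natCode 4) (ZFSet.range fun i => fmlCode (f i))

/-- The ordinal rank of an accessible point of a binary relation. -/
noncomputable def accRank {α : Type} {r : α → α → Prop} {a : α} (h : Acc r a) : Ordinal.{0} :=
  Acc.rec (fun x _ ih => ⨆ y : {y // r y x}, Order.succ (ih y.1 y.2)) h

/-- A structure in the language of set theory. -/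
structure SetStruct : Type 1 where
  carrier : Type
  mem : carrier → carrier → Prop

namespace SetStruct

variable (M : SetStruct)

/-- Satisfaction of a pure set-theoretic formula in `M`, relativized to `D`. -/
def Sat (D : Set M.carrier) (φ : Fml0) (v : ℕ → M.carrier) : Prop :=
  Fml.SatOn (fun _ => M.mem) (fun p => p.elim) D φ v

/-- Satisfaction of a formula with the extra predicate interpreted by `S ⊆ M`. -/
def SatS (S : Set M.carrier) (D : Set M.carrier) (φ : FmlS) (v : ℕ → M.carrier) : Prop :=
  Fml.SatOn (fun _ => M.mem) (fun _ x => x ∈ S) D φ v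

/-- `M` is nonstandard: its membership relation is ill-founded. -/
def Nonstandard : Prop := ∃ a, ¬ Acc M.mem a

/-- The well-founded part of `M`. -/
def WFpart : Set M.carrier := {a | Acc M.mem a}

/-- `a` is an ordinal of `M`: transitive and linearly ordered by membership
(hence well-ordered, by foundation). -/
def IsOrdinal (a : M.carrier) : Prop :=
  (∀ x, M.mem x a → ∀ y, M.mem y x → M.mem y a) ∧
    ∀ x y, M.mem x a → M.mem y a → (M.mem x y ∨ x = y ∨ M.mem y x)

/-- `a` is a standard ordinal of `M` (an ordinal in the well-founded part). -/
def IsStdOrd (a : M.carrier) : Prop := M.IsOrdinal a ∧ Acc M.mem a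

/-- `a` is a nonstandard ordinal of `M`. -/
def IsNSOrd (a : M.carrier) : Prop := M.IsOrdinal a ∧ ¬ Acc M.mem a

/-- `a` is a nonzero limit ordinal of `M`. -/
def IsLimitOrd (a : M.carrier) : Prop :=
  M.IsOrdinal a ∧ (∃ x, M.mem x a) ∧ ∀ x, M.mem x a → ∃ y, M.mem y a ∧ M.mem x y

/-- The transitive collapse of a point of the well-founded part of `M`. -/
noncomputable def collapse : (a : M.carrier) → Acc M.mem a → ZFSet.{0} :=
  fun _ h => Acc.rec (fun x _ ih => ZFSet.range fun y : {y // M.mem y x} => ih y.1 y.2) h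

/-- The transitive collapse of the well-founded part `WF(M)`, as a class of `ZFSet`s. -/
def Wset : Set ZFSet.{0} := {z | ∃ a h, M.collapse a h = z}

/-- `𝕃_M`: the infinitary formulas lying in (the transitive collapse of) `WF(M)`. -/
def LM : Set Fml0 := {φ | φ.Finitary ∧ fmlCode φ ∈ M.Wset}

/-- `Cod_W(M)`: subclasses of the (collapsed) well-founded part coded in `M`. -/
def CodW : Set (Set ZFSet.{0}) :=
  {X | ∃ c : M.carrier, X = {z | ∃ a h, M.mem a c ∧ M.collapse a h = z}}

/-- `o(M)`: the ordinal height of the well-founded part of `M`. -/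
noncomputable def ordHeight : Ordinal :=
  ⨆ a : M.WFpart, Order.succ (accRank a.2)

/-- `D₁` is an `L`-elementary substructure of `D₂` (as submodels of `M`). -/
def ElemOn (D₁ D₂ : Set M.carrier) (L : Set Fml0) : Prop :=
  D₁ ⊆ D₂ ∧ ∀ φ ∈ L, ∀ v : ℕ → M.carrier, (∀ n, v n ∈ D₁) →
    (M.Sat D₁ φ v ↔ M.Sat D₂ φ v)

/-- `p` is the Kuratowski ordered pair `⟨a, b⟩` in the sense of `M`. -/
def IsOPair (p a b : M.carrier) : Prop :=
  ∀ x, M.mem x p ↔ ((∀ y, M.mem y x ↔ y = a) ∨ (∀ y, M.mem y x ↔ (y = a ∨ y = b)))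

/-- `f(a) = b` for the set-function `f`, in the sense of `M`. -/
def FunAt (f a b : M.carrier) : Prop := ∃ p, M.mem p f ∧ M.IsOPair p a b

/-- `f` is a function with domain `a`, in the sense of `M`. -/
def IsFuncOn (f a : M.carrier) : Prop :=
  (∀ p, M.mem p f → ∃ x y, M.mem x a ∧ M.IsOPair p x y) ∧
    ∀ x, M.mem x a → ∃! y, M.FunAt f x y

/-- `t` is transitive in the sense of `M`. -/
def IsTransitive (t : M.carrier) : Prop := ∀ y, M.mem y t → ∀ z, M.mem z y → M.mem z t

/-- `x ∈ V(a)` in the sense of `M`: some transitive set containing `x` carries a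
rank function that is strictly `∈`-increasing with values in `a`. -/
def InVstage (x a : M.carrier) : Prop :=
  ∃ t r, M.IsTransitive t ∧ M.mem x t ∧
    (∀ y, M.mem y t → ∃ b, M.mem b a ∧ M.FunAt r y b) ∧
    (∀ y b b', M.FunAt r y b → M.FunAt r y b' → b = b') ∧
    (∀ y z b c, M.mem y t → M.mem z y → M.FunAt r y b → M.FunAt r z c → M.mem c b)

/-- The domain of the rank-initial segment `M(a) = (V(a), ∈)^M`. -/
def Stage (a : M.carrier) : Set M.carrier := {x | M.InVstage x a}

/-- `ρ^M(a) < ρ^M(b)`: the rank of `a` is smaller than the rank of `b`, in `M`. -/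
def rankLt (a b : M.carrier) : Prop :=
  ∃ o, M.IsOrdinal o ∧ M.InVstage a o ∧ ¬ M.InVstage b o

/-- The external depth of `φ` is (at most) an ordinal below the internal ordinal `γ`. -/
def depthLtOrd (φ : Fml0) (γ : M.carrier) : Prop :=
  ∃ b, M.mem b γ ∧ ∃ h : Acc M.mem b, φ.depth ≤ accRank h

/-- Separation scheme with the extra predicate interpreted by `S` (first-order). -/
def SepS (S : Set M.carrier) : Prop :=
  ∀ φ : FmlS, φ.IsFO → ∀ (v : ℕ → M.carrier) (a : M.carrier),
    ∃ b, ∀ x, M.mem x b ↔ (M.mem x a ∧ M.SatS S Set.univ φ (Function.update v 0 x))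

/-- Collection scheme with the extra predicate interpreted by `S` (first-order). -/
def CollS (S : Set M.carrier) : Prop :=
  ∀ φ : FmlS, φ.IsFO → ∀ (v : ℕ → M.carrier) (a : M.carrier),
    (∀ x, M.mem x a → ∃ y, M.SatS S Set.univ φ (Function.update (Function.update v 0 x) 1 y)) →
    ∃ b, ∀ x, M.mem x a →
      ∃ y, M.mem y b ∧ M.SatS S Set.univ φ (Function.update (Function.update v 0 x) 1 y)

/-- `S` is amenable over `M`: separative and collective. -/
def AmenableS (S : Set M.carrier) : Prop := M.SepS S ∧ M.CollS S

/-- Separation and collection schemes for all formulas in the class `L`. -/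
def SatisfiesSchemes (L : Set Fml0) : Prop :=
  (∀ φ ∈ L, ∀ (v : ℕ → M.carrier) (a : M.carrier),
    ∃ b, ∀ x, M.mem x b ↔ (M.mem x a ∧ M.Sat Set.univ φ (Function.update v 0 x))) ∧
  (∀ φ ∈ L, ∀ (v : ℕ → M.carrier) (a : M.carrier),
    (∀ x, M.mem x a → ∃ y, M.Sat Set.univ φ (Function.update (Function.update v 0 x) 1 y)) →
    ∃ b, ∀ x, M.mem x a →
      ∃ y, M.mem y b ∧ M.Sat Set.univ φ (Function.update (Function.update v 0 x) 1 y))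

/-- `Cod_W(M)`-saturation of the submodel of `M` with domain `D`. -/
def WSaturatedOn (D : Set M.carrier) : Prop :=
  ∀ p : Set Fml0, p ⊆ M.LM → (fmlCode '' p) ∈ M.CodW →
    ∀ v : ℕ → M.carrier, (∀ n, v n ∈ D) →
      (∀ w ∈ M.Wset, ∃ b ∈ D, ∀ φ ∈ p, fmlCode φ ∈ w → M.Sat D φ (Function.update v 0 b)) →
      ∃ b ∈ D, ∀ φ ∈ p, M.Sat D φ (Function.update v 0 b)

/-- `M` is `W`-saturated. -/
def WSaturated : Prop := M.WSaturatedOn Set.univ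

/-- `M` is isomorphic to its submodel with domain `D`. -/
def IsoOnto (D : Set M.carrier) : Prop :=
  ∃ g : M.carrier ≃ D, ∀ x y, M.mem x y ↔ M.mem (g x).1 (g y).1

/-- `M ≅ M(a) ≺_{𝕃_M} M`. -/
def CondensedAt (a : M.carrier) : Prop :=
  M.IsOrdinal a ∧ M.ElemOn (M.Stage a) Set.univ M.LM ∧ M.IsoOnto (M.Stage a)

/-- `M` is condensable. -/
def Condensable : Prop := ∃ a, M.CondensedAt a

/-- `M` is cofinally condensable. -/
def CofinallyCondensable : Prop :=
  ∀ b, M.IsOrdinal b → ∃ a, M.mem b a ∧ M.CondensedAt a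

/-- `Th_{𝕃_M}(M)`: the `𝕃_M`-sentences true in `M`. -/
def ThL : Set Fml0 :=
  {φ | φ ∈ M.LM ∧ φ.freeVars = ∅ ∧ ∀ v, M.Sat Set.univ φ v}

/-- The substructure of `M` with domain `D`. -/
def restrict (D : Set M.carrier) : SetStruct :=
  ⟨{x // x ∈ D}, fun x y => M.mem x.1 y.1⟩

/-- `f` is a bijection from `a` onto `k`, in the sense of `M`. -/
def IsBij (f a k : M.carrier) : Prop :=
  M.IsFuncOn f a ∧ (∀ x y, M.FunAt f x y → M.mem y k) ∧
    ∀ y, M.mem y k → ∃! x, M.mem x a ∧ M.FunAt f x y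

/-- `a` is a cardinal in the sense of `M`. -/
def IsCardinal (a : M.carrier) : Prop :=
  M.IsOrdinal a ∧ ∀ b, M.mem b a → ∀ f, ¬ M.IsBij f b a

/-- `a` is a regular cardinal in the sense of `M`. -/
def IsRegularCard (a : M.carrier) : Prop :=
  M.IsCardinal a ∧ ∀ b f, M.mem b a → M.IsFuncOn f b →
    (∀ x y, M.FunAt f x y → M.mem y a) →
    ∃ c, M.mem c a ∧ ∀ x y, M.mem x b → M.FunAt f x y → M.mem y c

end SetStruct

/-- ZF axioms for a structure in the language of set theory (the separation and
collection schemes range over first-order formulas). -/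
structure IsZF (M : SetStruct) : Prop where
  ext : ∀ a b, (∀ x, M.mem x a ↔ M.mem x b) → a = b
  pairing : ∀ a b, ∃ p, ∀ x, M.mem x p ↔ (x = a ∨ x = b)
  union : ∀ a, ∃ u, ∀ x, M.mem x u ↔ ∃ y, M.mem y a ∧ M.mem x y
  power : ∀ a, ∃ p, ∀ x, M.mem x p ↔ ∀ y, M.mem y x → M.mem y a
  infinity : ∃ a, (∃ e, M.mem e a ∧ ∀ x, ¬ M.mem x e) ∧
    ∀ x, M.mem x a → ∃ y, M.mem y a ∧ ∀ z, M.mem z y ↔ (M.mem z x ∨ z = x)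
  foundation : ∀ a, (∃ x, M.mem x a) → ∃ x, M.mem x a ∧ ∀ y, M.mem y x → ¬ M.mem y a
  separation : ∀ φ : Fml0, φ.IsFO → ∀ (v : ℕ → M.carrier) (a : M.carrier),
    ∃ b, ∀ x, M.mem x b ↔ (M.mem x a ∧ M.Sat Set.univ φ (Function.update v 0 x))
  collection : ∀ φ : Fml0, φ.IsFO → ∀ (v : ℕ → M.carrier) (a : M.carrier),
    (∀ x, M.mem x a → ∃ y, M.Sat Set.univ φ (Function.update (Function.update v 0 x) 1 y)) →
    ∃ b, ∀ x, M.mem x a →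
      ∃ y, M.mem y b ∧ M.Sat Set.univ φ (Function.update (Function.update v 0 x) 1 y)

/-- `M ⊨ ZF(L)`: ZF with separation and collection for all formulas in `L`. -/
def IsZFL (M : SetStruct) (L : Set Fml0) : Prop := IsZF M ∧ M.SatisfiesSchemes L

/-- Δ₀ formulas of the language of set theory (quantifiers are bounded). -/
inductive Delta0 : Fml0 → Prop
  | eq (i j : ℕ) : Delta0 (.eq i j)
  | rel (r : Unit) (i j : ℕ) : Delta0 (.rel r i j)
  | not {φ} : Delta0 φ → Delta0 φ.not
  | conj {ι : Type} (hι : Finite ι) {f : ι → Fml0} : (∀ i, Delta0 (f i)) → Delta0 (.conj f)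
  | bex {φ} (n m : ℕ) : Delta0 φ →
      Delta0 (.ex n (.conj fun b : Bool => if b then .rel () n m else φ))

/-- Kripke–Platek set theory, semantically rendered. -/
structure IsKP (M : SetStruct) : Prop where
  ext : ∀ a b, (∀ x, M.mem x a ↔ M.mem x b) → a = b
  pairing : ∀ a b, ∃ p, ∀ x, M.mem x p ↔ (x = a ∨ x = b)
  union : ∀ a, ∃ u, ∀ x, M.mem x u ↔ ∃ y, M.mem y a ∧ M.mem x y
  delta0Separation : ∀ φ : Fml0, Delta0 φ → ∀ (v : ℕ → M.carrier) (a : M.carrier),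
    ∃ b, ∀ x, M.mem x b ↔ (M.mem x a ∧ M.Sat Set.univ φ (Function.update v 0 x))
  delta0Collection : ∀ φ : Fml0, Delta0 φ → ∀ (v : ℕ → M.carrier) (a : M.carrier),
    (∀ x, M.mem x a → ∃ y, M.Sat Set.univ φ (Function.update (Function.update v 0 x) 1 y)) →
    ∃ b, ∀ x, M.mem x a →
      ∃ y, M.mem y b ∧ M.Sat Set.univ φ (Function.update (Function.update v 0 x) 1 y)
  inductionScheme : ∀ φ : Fml0, ∀ v : ℕ → M.carrier,
    (∀ a, (∀ x, M.mem x a → M.Sat Set.univ φ (Function.update v 0 x)) →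
      M.Sat Set.univ φ (Function.update v 0 a)) →
    ∀ a, M.Sat Set.univ φ (Function.update v 0 a)

/-- An (externalized) `γ`-satisfaction class over `M`: `code` assigns internal codes to
external formulas with assignments of constants, `S` decides atomic sentences correctly
and obeys Tarski's compositional clauses for formulas of depth `< γ`. -/
structure SatClass (M : SetStruct) (γ : M.carrier) (S : Set M.carrier) where
  code : Fml0 → (ℕ → M.carrier) → M.carrier
  atom_eq : ∀ i j v, code (.eq i j) v ∈ S ↔ v i = v j
  atom_mem : ∀ r i j v, code (.rel r i j) v ∈ S ↔ M.mem (v i) (v j)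
  comp_not : ∀ (φ : Fml0) v, φ.Finitary → M.depthLtOrd (.not φ) γ →
    (code (.not φ) v ∈ S ↔ code φ v ∉ S)
  comp_ex : ∀ (n : ℕ) (φ : Fml0) v, φ.Finitary → M.depthLtOrd (.ex n φ) γ →
    (code (.ex n φ) v ∈ S ↔ ∃ a, code φ (Function.update v n a) ∈ S)
  comp_conj : ∀ {ι : Type} (f : ι → Fml0) v, (Fml.conj f).Finitary →
    M.depthLtOrd (.conj f) γ →
    (code (.conj f) v ∈ S ↔ ∀ i, code (f i) v ∈ S)

/-! ### Auxiliary layer: formula combinators and satisfaction lemmas -/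

section AuxCombinators

open Fml

/-- binary conjunction -/
def fand (φ ψ : Fml0) : Fml0 := .conj fun b : Bool => bif b then φ else ψ
def fall (n : ℕ) (φ : Fml0) : Fml0 := .not (.ex n φ.not)
def for' (φ ψ : Fml0) : Fml0 := .not (fand φ.not ψ.not)
def fimp (φ ψ : Fml0) : Fml0 := for' φ.not ψ
def fiff (φ ψ : Fml0) : Fml0 := fand (fimp φ ψ) (fimp ψ φ)
def fmem (i j : ℕ) : Fml0 := .rel () i j

variable {N : SetStruct} {v : ℕ → N.carrier} {φ ψ : Fml0}

lemma isFO_fand (h1 : φ.IsFO) (h2 : ψ.IsFO) : (fand φ ψ).IsFO := by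
  refine .conj inferInstance fun b => ?_
  cases b <;> simpa [fand]
lemma isFO_fall (n : ℕ) (h : φ.IsFO) : (fall n φ).IsFO := .not (.ex n (.not h))
lemma isFO_for' (h1 : φ.IsFO) (h2 : ψ.IsFO) : (for' φ ψ).IsFO :=
  .not (isFO_fand (.not h1) (.not h2))
lemma isFO_fimp (h1 : φ.IsFO) (h2 : ψ.IsFO) : (fimp φ ψ).IsFO := isFO_for' (.not h1) h2
lemma isFO_fiff (h1 : φ.IsFO) (h2 : ψ.IsFO) : (fiff φ ψ).IsFO :=
  isFO_fand (isFO_fimp h1 h2) (isFO_fimp h2 h1)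
lemma isFO_fmem (i j : ℕ) : (fmem i j).IsFO := .rel () i j

lemma sat_mem {i j : ℕ} : N.Sat Set.univ (fmem i j) v ↔ N.mem (v i) (v j) := Iff.rfl
lemma sat_eq {i j : ℕ} : N.Sat Set.univ (.eq i j) v ↔ v i = v j := Iff.rfl
lemma sat_not : N.Sat Set.univ φ.not v ↔ ¬ N.Sat Set.univ φ v := Iff.rfl
lemma sat_and : N.Sat Set.univ (fand φ ψ) v ↔ N.Sat Set.univ φ v ∧ N.Sat Set.univ ψ v := by
  constructor
  · intro h; exact ⟨h true, h false⟩
  · rintro ⟨h1, h2⟩ b; cases b <;> simpa [fand, SetStruct.Sat, Fml.SatOn]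
lemma sat_ex {n : ℕ} : N.Sat Set.univ (.ex n φ) v ↔ ∃ a, N.Sat Set.univ φ (Function.update v n a) := by
  simp [SetStruct.Sat, Fml.SatOn]
lemma sat_all {n : ℕ} : N.Sat Set.univ (fall n φ) v ↔ ∀ a, N.Sat Set.univ φ (Function.update v n a) := by
  simp only [fall, sat_not, sat_ex]
  push_neg
  exact Iff.rfl
lemma sat_or : N.Sat Set.univ (for' φ ψ) v ↔ (N.Sat Set.univ φ v ∨ N.Sat Set.univ ψ v) := by
  simp only [for', sat_not, sat_and]
  tauto
lemma sat_imp : N.Sat Set.univ (fimp φ ψ) v ↔ (N.Sat Set.univ φ v → N.Sat Set.univ ψ v) := by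
  simp only [fimp, sat_or, sat_not]; tauto
lemma sat_iff : N.Sat Set.univ (fiff φ ψ) v ↔ (N.Sat Set.univ φ v ↔ N.Sat Set.univ ψ v) := by
  simp only [fiff, sat_and, sat_imp]; tauto

end AuxCombinators

/-! ### Layer 2: concrete formulas with variable-index parameters -/

section AuxFormulas

open Fml

/-- formula for `IsOPair (v p) (v a) (v b)`; bound variables `u`, `u+1`. -/
def opairFml (p a b u : ℕ) : Fml0 :=
  fall u (fiff (fmem u p)
    (for' (fall (u+1) (fiff (fmem (u+1) u) (.eq (u+1) a)))
          (fall (u+1) (fiff (fmem (u+1) u) (for' (.eq (u+1) a) (.eq (u+1) b))))))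

/-- formula for `FunAt (v r) (v a) (v b)`; bound variables `u`..`u+2`. -/
def funAtFml (r a b u : ℕ) : Fml0 := .ex u (fand (fmem u r) (opairFml u a b (u+1)))

/-- formula for `IsTransitive (v t)`; bound `u`, `u+1`. -/
def transFml (t u : ℕ) : Fml0 :=
  fall u (fimp (fmem u t) (fall (u+1) (fimp (fmem (u+1) u) (fmem (u+1) t))))

variable {N : SetStruct} {v : ℕ → N.carrier}

lemma isFO_opair (p a b u : ℕ) : (opairFml p a b u).IsFO := by
  unfold opairFml
  exact isFO_fall _ (isFO_fiff (isFO_fmem _ _) (isFO_for'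
    (isFO_fall _ (isFO_fiff (isFO_fmem _ _) (.eq _ _)))
    (isFO_fall _ (isFO_fiff (isFO_fmem _ _) (isFO_for' (.eq _ _) (.eq _ _))))))

lemma isFO_funAt (r a b u : ℕ) : (funAtFml r a b u).IsFO :=
  .ex _ (isFO_fand (isFO_fmem _ _) (isFO_opair _ _ _ _))

lemma isFO_trans (t u : ℕ) : (transFml t u).IsFO :=
  isFO_fall _ (isFO_fimp (isFO_fmem _ _) (isFO_fall _ (isFO_fimp (isFO_fmem _ _) (isFO_fmem _ _))))

lemma sat_opair {p a b u : ℕ} (hp : p < u) (ha : a < u) (hb : b < u) :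
    N.Sat Set.univ (opairFml p a b u) v ↔ N.IsOPair (v p) (v a) (v b) := by
  have h1 : p ≠ u := hp.ne
  have h2 : a ≠ u := ha.ne
  have h3 : b ≠ u := hb.ne
  have h4 : a ≠ u+1 := by omega
  have h5 : b ≠ u+1 := by omega
  have h6 : u ≠ u+1 := by omega
  simp only [opairFml, sat_all, sat_iff, sat_or, sat_mem, sat_eq,
    Function.update_self, Function.update_of_ne h1, Function.update_of_ne h2,
    Function.update_of_ne h3, Function.update_of_ne h4, Function.update_of_ne h5,
    Function.update_of_ne h6]
  exact Iff.rfl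

lemma sat_funAt {r a b u : ℕ} (hr : r < u) (ha : a < u) (hb : b < u) :
    N.Sat Set.univ (funAtFml r a b u) v ↔ N.FunAt (v r) (v a) (v b) := by
  have h1 : r ≠ u := hr.ne
  have h2 : a ≠ u := ha.ne
  have h3 : b ≠ u := hb.ne
  simp only [funAtFml, sat_ex, sat_and, sat_mem,
    sat_opair (show u < u+1 by omega) (show a < u+1 by omega) (show b < u+1 by omega),
    Function.update_self, Function.update_of_ne h1, Function.update_of_ne h2,
    Function.update_of_ne h3]
  exact Iff.rfl

lemma sat_trans {t u : ℕ} (ht : t < u) :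
    N.Sat Set.univ (transFml t u) v ↔ N.IsTransitive (v t) := by
  have h1 : t ≠ u := ht.ne
  have h2 : t ≠ u+1 := by omega
  have h3 : u ≠ u+1 := by omega
  simp only [transFml, sat_all, sat_imp, sat_mem,
    Function.update_self, Function.update_of_ne h1, Function.update_of_ne h2,
    Function.update_of_ne h3]
  exact Iff.rfl

end AuxFormulas

/-! ### Layer 3: canonical rank-function predicates and their formulas -/

section AuxCan

open Fml

/-- `r` is a canonical rank function on the transitive set `t`. -/
def CanP (N : SetStruct) (t r : N.carrier) : Prop :=
  N.IsTransitive t ∧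
  (∀ q, N.mem q r → ∃ y, ∃ b, N.mem y t ∧ N.IsOPair q y b) ∧
  (∀ y, N.mem y t → ∃ b, N.FunAt r y b) ∧
  (∀ y, ∀ b, N.mem y t ∧ N.FunAt r y b →
     ∀ c, (N.mem c b ↔ ∃ z, N.mem z y ∧ ∃ d, N.FunAt r z d ∧ (N.mem c d ∨ c = d)))

/-- `t` is contained in every canonically-ranked transitive set containing `x`. -/
def MinP (N : SetStruct) (t x : N.carrier) : Prop :=
  ∀ t' r', CanP N t' r' ∧ N.mem x t' → ∀ z, N.mem z t → N.mem z t'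

/-- formula for `CanP (v t) (v r)`; bound variables `u`..`u+9`. -/
def canFml (t r u : ℕ) : Fml0 :=
  fand (transFml t u)
    (fand
      (fall u (fimp (fmem u r) (.ex (u+1) (.ex (u+2)
        (fand (fmem (u+1) t) (opairFml u (u+1) (u+2) (u+3)))))))
      (fand
        (fall u (fimp (fmem u t) (.ex (u+1) (funAtFml r u (u+1) (u+2)))))
        (fall u (fall (u+1) (fimp (fand (fmem u t) (funAtFml r u (u+1) (u+2)))
          (fall (u+2) (fiff (fmem (u+2) (u+1))
            (.ex (u+3) (fand (fmem (u+3) u)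
              (.ex (u+4) (fand (funAtFml r (u+3) (u+4) (u+5))
                (for' (fmem (u+2) (u+4)) (.eq (u+2) (u+4))))))))))))))

/-- formula for `MinP (v t) (v x)`; bound variables `u`..`u+12`. -/
def minFml (t x u : ℕ) : Fml0 :=
  fall u (fall (u+1) (fimp (fand (canFml u (u+1) (u+3)) (fmem x u))
    (fall (u+2) (fimp (fmem (u+2) t) (fmem (u+2) u)))))

lemma isFO_can (t r u : ℕ) : (canFml t r u).IsFO := by
  unfold canFml
  refine isFO_fand (isFO_trans _ _) (isFO_fand ?_ (isFO_fand ?_ ?_))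
  · exact isFO_fall _ (isFO_fimp (isFO_fmem _ _) (.ex _ (.ex _
      (isFO_fand (isFO_fmem _ _) (isFO_opair _ _ _ _)))))
  · exact isFO_fall _ (isFO_fimp (isFO_fmem _ _) (.ex _ (isFO_funAt _ _ _ _)))
  · exact isFO_fall _ (isFO_fall _ (isFO_fimp (isFO_fand (isFO_fmem _ _) (isFO_funAt _ _ _ _))
      (isFO_fall _ (isFO_fiff (isFO_fmem _ _) (.ex _ (isFO_fand (isFO_fmem _ _)
        (.ex _ (isFO_fand (isFO_funAt _ _ _ _) (isFO_for' (isFO_fmem _ _) (.eq _ _))))))))))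

lemma isFO_min (t x u : ℕ) : (minFml t x u).IsFO :=
  isFO_fall _ (isFO_fall _ (isFO_fimp (isFO_fand (isFO_can _ _ _) (isFO_fmem _ _))
    (isFO_fall _ (isFO_fimp (isFO_fmem _ _) (isFO_fmem _ _)))))

variable {N : SetStruct} {v : ℕ → N.carrier}

lemma sat_can {t r u : ℕ} (ht : t < u) (hr : r < u) :
    N.Sat Set.univ (canFml t r u) v ↔ CanP N (v t) (v r) := by
  have e1 : t ≠ u := ht.ne
  have e2 : r ≠ u := hr.ne
  have e3 : t ≠ u+1 := by omega
  have e4 : r ≠ u+1 := by omega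
  have e5 : t ≠ u+2 := by omega
  have e6 : r ≠ u+2 := by omega
  have e7 : u ≠ u+1 := by omega
  have e8 : u ≠ u+2 := by omega
  have e9 : u+1 ≠ u+2 := by omega
  have e10 : u ≠ u+3 := by omega
  have e11 : u+1 ≠ u+3 := by omega
  have e12 : u+3 ≠ u+4 := by omega
  have e13 : u+2 ≠ u+3 := by omega
  have e14 : u+2 ≠ u+4 := by omega
  have e15 : r ≠ u+3 := by omega
  have e16 : r ≠ u+4 := by omega
  simp only [canFml, sat_and, sat_all, sat_imp, sat_iff, sat_or, sat_ex, sat_mem, sat_eq,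
    sat_trans ht,
    sat_opair (show u < u+3 by omega) (show u+1 < u+3 by omega) (show u+2 < u+3 by omega),
    sat_funAt (show r < u+2 by omega) (show u < u+2 by omega) (show u+1 < u+2 by omega),
    sat_funAt (show r < u+5 by omega) (show u+3 < u+5 by omega) (show u+4 < u+5 by omega),
    Function.update_self, Function.update_of_ne e1, Function.update_of_ne e2,
    Function.update_of_ne e3, Function.update_of_ne e4, Function.update_of_ne e5,
    Function.update_of_ne e6, Function.update_of_ne e7, Function.update_of_ne e8,
    Function.update_of_ne e9, Function.update_of_ne e10, Function.update_of_ne e11,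
    Function.update_of_ne e12, Function.update_of_ne e13, Function.update_of_ne e14,
    Function.update_of_ne e15, Function.update_of_ne e16]
  exact Iff.rfl

lemma sat_min {t x u : ℕ} (ht : t < u) (hx : x < u) :
    N.Sat Set.univ (minFml t x u) v ↔ MinP N (v t) (v x) := by
  have e1 : t ≠ u := ht.ne
  have e2 : x ≠ u := hx.ne
  have e3 : t ≠ u+1 := by omega
  have e4 : x ≠ u+1 := by omega
  have e5 : t ≠ u+2 := by omega
  have e6 : u ≠ u+1 := by omega
  have e7 : u ≠ u+2 := by omega
  have e8 : u+1 ≠ u+2 := by omega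
  simp only [minFml, sat_all, sat_imp, sat_and, sat_mem,
    sat_can (show u < u+3 by omega) (show u+1 < u+3 by omega),
    Function.update_self, Function.update_of_ne e1, Function.update_of_ne e2,
    Function.update_of_ne e3, Function.update_of_ne e4, Function.update_of_ne e5,
    Function.update_of_ne e6, Function.update_of_ne e7, Function.update_of_ne e8]
  exact Iff.rfl

end AuxCan

/-! ### Layer 4: the collection and separation formulas of the construction -/

section AuxBig

open Fml

/-- collection formula: `v 1` codes a minimal canonically-ranked witness for `v 0`. -/
def psiFml : Fml0 :=
  .ex 2 (.ex 3 (fand (opairFml 1 2 3 4)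
    (fand (canFml 2 3 4) (fand (fmem 0 2) (minFml 2 0 4)))))

/-- separation formula extracting the `t`-parts: parameters `v 1 = x`, `v 2 = B`. -/
def sepTFml : Fml0 :=
  .ex 3 (fand (fmem 3 2) (.ex 4 (fand (fmem 4 1) (.ex 5 (.ex 6
    (fand (opairFml 3 5 6 7) (fand (canFml 5 6 7)
      (fand (fmem 4 5) (fand (minFml 5 4 7) (fmem 0 5))))))))))

/-- separation formula extracting the `r`-parts. -/
def sepRFml : Fml0 :=
  .ex 3 (fand (fmem 3 2) (.ex 4 (fand (fmem 4 1) (.ex 5 (.ex 6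
    (fand (opairFml 3 5 6 7) (fand (canFml 5 6 7)
      (fand (fmem 4 5) (fand (minFml 5 4 7) (fmem 0 6))))))))))

/-- separation formula for the rank value at `x`: parameters `v 1 = x`, `v 2 = R`. -/
def sepBFml : Fml0 :=
  .ex 3 (fand (fmem 3 1) (.ex 4 (fand (funAtFml 2 3 4 5)
    (for' (fmem 0 4) (.eq 0 4)))))

lemma isFO_psi : psiFml.IsFO :=
  .ex _ (.ex _ (isFO_fand (isFO_opair _ _ _ _)
    (isFO_fand (isFO_can _ _ _) (isFO_fand (isFO_fmem _ _) (isFO_min _ _ _)))))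

lemma isFO_sepT : sepTFml.IsFO :=
  .ex _ (isFO_fand (isFO_fmem _ _) (.ex _ (isFO_fand (isFO_fmem _ _) (.ex _ (.ex _
    (isFO_fand (isFO_opair _ _ _ _) (isFO_fand (isFO_can _ _ _)
      (isFO_fand (isFO_fmem _ _) (isFO_fand (isFO_min _ _ _) (isFO_fmem _ _))))))))))

lemma isFO_sepR : sepRFml.IsFO :=
  .ex _ (isFO_fand (isFO_fmem _ _) (.ex _ (isFO_fand (isFO_fmem _ _) (.ex _ (.ex _
    (isFO_fand (isFO_opair _ _ _ _) (isFO_fand (isFO_can _ _ _)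
      (isFO_fand (isFO_fmem _ _) (isFO_fand (isFO_min _ _ _) (isFO_fmem _ _))))))))))

lemma isFO_sepB : sepBFml.IsFO :=
  .ex _ (isFO_fand (isFO_fmem _ _) (.ex _ (isFO_fand (isFO_funAt _ _ _ _)
    (isFO_for' (isFO_fmem _ _) (.eq _ _)))))

variable {N : SetStruct} {v : ℕ → N.carrier}

lemma sat_psi :
    N.Sat Set.univ psiFml v ↔
      ∃ t r, N.IsOPair (v 1) t r ∧ CanP N t r ∧ N.mem (v 0) t ∧ MinP N t (v 0) := by
  have e1 : (0:ℕ) ≠ 2 := by omega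
  have e2 : (0:ℕ) ≠ 3 := by omega
  have e3 : (1:ℕ) ≠ 2 := by omega
  have e4 : (1:ℕ) ≠ 3 := by omega
  have e5 : (2:ℕ) ≠ 3 := by omega
  simp only [psiFml, sat_ex, sat_and, sat_mem,
    sat_opair (show 1 < 4 by omega) (show 2 < 4 by omega) (show 3 < 4 by omega),
    sat_can (show 2 < 4 by omega) (show 3 < 4 by omega),
    sat_min (show 2 < 4 by omega) (show 0 < 4 by omega),
    Function.update_self, Function.update_of_ne e1, Function.update_of_ne e2,
    Function.update_of_ne e3, Function.update_of_ne e4, Function.update_of_ne e5]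

lemma sat_sepT :
    N.Sat Set.univ sepTFml v ↔
      ∃ p, N.mem p (v 2) ∧ ∃ y, N.mem y (v 1) ∧ ∃ t r, N.IsOPair p t r ∧ CanP N t r ∧
        N.mem y t ∧ MinP N t y ∧ N.mem (v 0) t := by
  have e01 : (0:ℕ) ≠ 3 := by omega
  have e02 : (0:ℕ) ≠ 4 := by omega
  have e03 : (0:ℕ) ≠ 5 := by omega
  have e04 : (0:ℕ) ≠ 6 := by omega
  have e05 : (1:ℕ) ≠ 3 := by omega
  have e06 : (1:ℕ) ≠ 4 := by omega
  have e07 : (2:ℕ) ≠ 3 := by omega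
  have e08 : (3:ℕ) ≠ 4 := by omega
  have e09 : (3:ℕ) ≠ 5 := by omega
  have e10 : (3:ℕ) ≠ 6 := by omega
  have e11 : (4:ℕ) ≠ 5 := by omega
  have e12 : (4:ℕ) ≠ 6 := by omega
  have e13 : (5:ℕ) ≠ 6 := by omega
  simp only [sepTFml, sat_ex, sat_and, sat_mem,
    sat_opair (show 3 < 7 by omega) (show 5 < 7 by omega) (show 6 < 7 by omega),
    sat_can (show 5 < 7 by omega) (show 6 < 7 by omega),
    sat_min (show 5 < 7 by omega) (show 4 < 7 by omega),
    Function.update_self, Function.update_of_ne e01, Function.update_of_ne e02,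
    Function.update_of_ne e03, Function.update_of_ne e04, Function.update_of_ne e05,
    Function.update_of_ne e06, Function.update_of_ne e07, Function.update_of_ne e08,
    Function.update_of_ne e09, Function.update_of_ne e10, Function.update_of_ne e11,
    Function.update_of_ne e12, Function.update_of_ne e13]

lemma sat_sepR :
    N.Sat Set.univ sepRFml v ↔
      ∃ p, N.mem p (v 2) ∧ ∃ y, N.mem y (v 1) ∧ ∃ t r, N.IsOPair p t r ∧ CanP N t r ∧
        N.mem y t ∧ MinP N t y ∧ N.mem (v 0) r := by
  have e01 : (0:ℕ) ≠ 3 := by omega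
  have e02 : (0:ℕ) ≠ 4 := by omega
  have e03 : (0:ℕ) ≠ 5 := by omega
  have e04 : (0:ℕ) ≠ 6 := by omega
  have e05 : (1:ℕ) ≠ 3 := by omega
  have e06 : (1:ℕ) ≠ 4 := by omega
  have e07 : (2:ℕ) ≠ 3 := by omega
  have e08 : (3:ℕ) ≠ 4 := by omega
  have e09 : (3:ℕ) ≠ 5 := by omega
  have e10 : (3:ℕ) ≠ 6 := by omega
  have e11 : (4:ℕ) ≠ 5 := by omega
  have e12 : (4:ℕ) ≠ 6 := by omega
  have e13 : (5:ℕ) ≠ 6 := by omega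
  simp only [sepRFml, sat_ex, sat_and, sat_mem,
    sat_opair (show 3 < 7 by omega) (show 5 < 7 by omega) (show 6 < 7 by omega),
    sat_can (show 5 < 7 by omega) (show 6 < 7 by omega),
    sat_min (show 5 < 7 by omega) (show 4 < 7 by omega),
    Function.update_self, Function.update_of_ne e01, Function.update_of_ne e02,
    Function.update_of_ne e03, Function.update_of_ne e04, Function.update_of_ne e05,
    Function.update_of_ne e06, Function.update_of_ne e07, Function.update_of_ne e08,
    Function.update_of_ne e09, Function.update_of_ne e10, Function.update_of_ne e11,
    Function.update_of_ne e12, Function.update_of_ne e13]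

lemma sat_sepB :
    N.Sat Set.univ sepBFml v ↔
      ∃ z, N.mem z (v 1) ∧ ∃ d, N.FunAt (v 2) z d ∧ (N.mem (v 0) d ∨ v 0 = d) := by
  have e01 : (0:ℕ) ≠ 3 := by omega
  have e02 : (0:ℕ) ≠ 4 := by omega
  have e03 : (1:ℕ) ≠ 3 := by omega
  have e04 : (2:ℕ) ≠ 3 := by omega
  have e05 : (2:ℕ) ≠ 4 := by omega
  have e06 : (3:ℕ) ≠ 4 := by omega
  simp only [sepBFml, sat_ex, sat_and, sat_or, sat_mem, sat_eq,
    sat_funAt (show 2 < 5 by omega) (show 3 < 5 by omega) (show 4 < 5 by omega),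
    Function.update_self, Function.update_of_ne e01, Function.update_of_ne e02,
    Function.update_of_ne e03, Function.update_of_ne e04, Function.update_of_ne e05,
    Function.update_of_ne e06]

end AuxBig

/-! ### Layer 5: external set-theoretic lemmas in a model of ZF -/

section AuxZF

variable {N : SetStruct}

lemma accRank_eq {α : Type} {r : α → α → Prop} {a : α} (h : Acc r a) :
    accRank h = ⨆ y : {y // r y a}, Order.succ (accRank (h.inv y.2)) := by
  cases h with
  | intro a h' => rfl

lemma accRank_irrel {α : Type} {r : α → α → Prop} {a : α} (h h' : Acc r a) :
    accRank h = accRank h' := congrArg _ (Subsingleton.elim h h')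

lemma accRank_lt {α : Type} {r : α → α → Prop} {a b : α} (h : Acc r b) (hab : r a b) :
    accRank (h.inv hab) < accRank h := by
  rw [accRank_eq h]
  exact lt_of_lt_of_le (Order.lt_succ _) (Ordinal.le_iSup _ (⟨a, hab⟩ : {y // r y b}))

/-- intersection with a set, by Δ₀ separation. -/
lemma sepMemSet (hN : IsZF N) (a b : N.carrier) : ∃ c, ∀ z, N.mem z c ↔ (N.mem z a ∧ N.mem z b) := by
  obtain ⟨c, hc⟩ := hN.separation (fmem 0 1) (isFO_fmem 0 1) (fun _ => b) a
  refine ⟨c, fun z => ?_⟩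
  rw [hc z, sat_mem, Function.update_self,
    Function.update_of_ne (show (1:ℕ) ≠ 0 by omega)]

/-- difference with a set. -/
lemma sepDiffSet (hN : IsZF N) (a b : N.carrier) : ∃ c, ∀ z, N.mem z c ↔ (N.mem z a ∧ ¬ N.mem z b) := by
  obtain ⟨c, hc⟩ := hN.separation (Fml.not (fmem 0 1)) (.not (isFO_fmem 0 1)) (fun _ => b) a
  refine ⟨c, fun z => ?_⟩
  rw [hc z, sat_not, sat_mem, Function.update_self,
    Function.update_of_ne (show (1:ℕ) ≠ 0 by omega)]

lemma no2cycle (hN : IsZF N) {a b : N.carrier} (hab : N.mem a b) (hba : N.mem b a) : False := by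
  obtain ⟨p, hp⟩ := hN.pairing a b
  obtain ⟨m, hm, hmin⟩ := hN.foundation p ⟨a, (hp a).2 (Or.inl rfl)⟩
  rcases (hp m).1 hm with rfl | rfl
  · exact hmin b hba ((hp b).2 (Or.inr rfl))
  · exact hmin a hab ((hp a).2 (Or.inl rfl))

lemma selfMem (hN : IsZF N) {a : N.carrier} (h : N.mem a a) : False := no2cycle hN h h

lemma no3cycle (hN : IsZF N) {a b c : N.carrier} (hab : N.mem a b) (hbc : N.mem b c) (hca : N.mem c a) :
    False := by
  obtain ⟨p1, hp1⟩ := hN.pairing a b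
  obtain ⟨p2, hp2⟩ := hN.pairing c c
  obtain ⟨pp, hpp⟩ := hN.pairing p1 p2
  obtain ⟨u, hu⟩ := hN.union pp
  have hmemu : ∀ z, N.mem z u ↔ (z = a ∨ z = b ∨ z = c) := by
    intro z
    rw [hu z]
    constructor
    · rintro ⟨y, hy, hzy⟩
      rcases (hpp y).1 hy with rfl | rfl
      · rcases (hp1 z).1 hzy with rfl | rfl
        · exact Or.inl rfl
        · exact Or.inr (Or.inl rfl)
      · rcases (hp2 z).1 hzy with rfl | rfl <;> exact Or.inr (Or.inr rfl)
    · rintro (rfl | rfl | rfl)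
      · exact ⟨p1, (hpp p1).2 (Or.inl rfl), (hp1 z).2 (Or.inl rfl)⟩
      · exact ⟨p1, (hpp p1).2 (Or.inl rfl), (hp1 z).2 (Or.inr rfl)⟩
      · exact ⟨p2, (hpp p2).2 (Or.inr rfl), (hp2 z).2 (Or.inl rfl)⟩
  obtain ⟨m, hm, hmin⟩ := hN.foundation u ⟨a, (hmemu a).2 (Or.inl rfl)⟩
  rcases (hmemu m).1 hm with rfl | rfl | rfl
  · exact hmin c hca ((hmemu c).2 (Or.inr (Or.inr rfl)))
  · exact hmin a hab ((hmemu a).2 (Or.inl rfl))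
  · exact hmin b hbc ((hmemu b).2 (Or.inr (Or.inl rfl)))

lemma memOrdinal (hN : IsZF N) {o c : N.carrier} (ho : N.IsOrdinal o) (hc : N.mem c o) : N.IsOrdinal c := by
  obtain ⟨hot, hol⟩ := ho
  constructor
  · intro w hw u hu
    have hwo : N.mem w o := hot c hc w hw
    have huo : N.mem u o := hot w hwo u hu
    rcases hol u c huo hc with h | h | h
    · exact h
    · subst h; exact absurd hw (fun hw' => no2cycle hN hu hw')
    · exact absurd h (fun h' => no3cycle hN h' hu hw)
  · intro x y hx hy
    exact hol x y (hot c hc x hx) (hot c hc y hy)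

lemma subsetMemOrd (hN : IsZF N) {o b : N.carrier} (ho : N.IsOrdinal o) (hb : N.IsOrdinal b)
    (hsub : ∀ z, N.mem z b → N.mem z o) (hne : b ≠ o) : N.mem b o := by
  obtain ⟨d, hd⟩ := sepDiffSet hN o b
  have hdne : ∃ u, N.mem u d := by
    by_contra hno
    push_neg at hno
    refine hne (hN.ext b o fun z => ⟨hsub z, fun hz => ?_⟩)
    by_contra hzb
    exact hno z ((hd z).2 ⟨hz, hzb⟩)
  obtain ⟨m, hm, hmin⟩ := hN.foundation d hdne
  obtain ⟨hmo, hmb⟩ := (hd m).1 hm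
  have : m = b := by
    refine hN.ext m b fun z => ⟨fun hz => ?_, fun hz => ?_⟩
    · by_contra hzb
      exact hmin z hz ((hd z).2 ⟨ho.1 m hmo z hz, hzb⟩)
    · have hzo : N.mem z o := hsub z hz
      rcases ho.2 z m hzo hmo with h | h | h
      · exact h
      · exact absurd (h ▸ hz) hmb
      · exact absurd (hb.1 z hz m h) hmb
  exact this ▸ hmo

lemma ordTrichotomy (hN : IsZF N) {a b : N.carrier} (ha : N.IsOrdinal a) (hb : N.IsOrdinal b) :
    N.mem a b ∨ a = b ∨ N.mem b a := by
  obtain ⟨c, hc⟩ := sepMemSet hN a b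
  have hcord : N.IsOrdinal c := by
    constructor
    · intro y hy z hz
      obtain ⟨hya, hyb⟩ := (hc y).1 hy
      exact (hc z).2 ⟨ha.1 y hya z hz, hb.1 y hyb z hz⟩
    · intro x y hx hy
      exact ha.2 x y ((hc x).1 hx).1 ((hc y).1 hy).1
  by_cases h1 : c = a <;> by_cases h2 : c = b
  · exact Or.inr (Or.inl (h1 ▸ h2))
  · have : N.mem c b := subsetMemOrd hN hb hcord (fun z hz => ((hc z).1 hz).2) h2
    exact Or.inl (h1 ▸ this)
  · have : N.mem c a := subsetMemOrd hN ha hcord (fun z hz => ((hc z).1 hz).1) h1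
    exact Or.inr (Or.inr (h2 ▸ this))
  · have hca : N.mem c a := subsetMemOrd hN ha hcord (fun z hz => ((hc z).1 hz).1) h1
    have hcb : N.mem c b := subsetMemOrd hN hb hcord (fun z hz => ((hc z).1 hz).2) h2
    exact absurd ((hc c).2 ⟨hca, hcb⟩) (fun h => selfMem hN h)

lemma accOrdMemIllOrd (hN : IsZF N) {b o : N.carrier} (hb : N.IsOrdinal b) (hab : Acc N.mem b)
    (ho : N.IsOrdinal o) (hno : ¬ Acc N.mem o) : N.mem b o := by
  rcases ordTrichotomy hN hb ho with h | h | h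
  · exact h
  · exact absurd (h ▸ hab) hno
  · exact absurd (hab.inv h) hno

lemma mkOPair (hN : IsZF N) (a b : N.carrier) : ∃ p, N.IsOPair p a b := by
  obtain ⟨s1, hs1⟩ := hN.pairing a a
  obtain ⟨s2, hs2⟩ := hN.pairing a b
  obtain ⟨p, hp⟩ := hN.pairing s1 s2
  have hs1' : ∀ y, N.mem y s1 ↔ y = a := by
    intro y; rw [hs1 y, or_self]
  refine ⟨p, fun x => (hp x).trans ⟨?_, ?_⟩⟩
  · rintro (rfl | rfl)
    · exact Or.inl hs1'
    · exact Or.inr hs2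
  · rintro (h | h)
    · exact Or.inl (hN.ext x s1 fun y => (h y).trans (hs1' y).symm)
    · exact Or.inr (hN.ext x s2 fun y => (h y).trans (hs2 y).symm)

lemma opairExt (hN : IsZF N) {p p' a b : N.carrier} (h1 : N.IsOPair p a b) (h2 : N.IsOPair p' a b) :
    p = p' := hN.ext p p' fun x => (h1 x).trans (h2 x).symm

lemma opairInj (hN : IsZF N) {p a b a' b' : N.carrier} (h : N.IsOPair p a b) (h' : N.IsOPair p a' b') :
    a = a' ∧ b = b' := by
  obtain ⟨s1, hs1⟩ := hN.pairing a a
  have hs1a : ∀ y, N.mem y s1 ↔ y = a := fun y => by rw [hs1 y, or_self]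
  have hs1p : N.mem s1 p := (h s1).2 (Or.inl hs1a)
  have hA : a' = a := by
    rcases (h' s1).1 hs1p with d1 | d2
    · exact (hs1a a').1 ((d1 a').2 rfl)
    · exact (hs1a a').1 ((d2 a').2 (Or.inl rfl))
  obtain ⟨s2, hs2⟩ := hN.pairing a b
  have hs2p : N.mem s2 p := (h s2).2 (Or.inr hs2)
  have hcase : a = b → b' = b := by
    intro hab
    obtain ⟨s2', hs2'⟩ := hN.pairing a' b'
    have hmem : N.mem s2' p := (h' s2').2 (Or.inr hs2')
    have hb' : N.mem b' s2' := (hs2' b').2 (Or.inr rfl)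
    rcases (h s2').1 hmem with d1 | d2
    · exact ((d1 b').1 hb').trans hab
    · rcases (d2 b').1 hb' with h1 | h1
      · exact h1.trans hab
      · exact h1
  rcases (h' s2).1 hs2p with d1 | d2
  · have hba : b = a' := (d1 b).1 ((hs2 b).2 (Or.inr rfl))
    have hab : a = b := by rw [hba, hA]
    exact ⟨hA.symm, (hcase hab).symm⟩
  · rcases (d2 b).1 ((hs2 b).2 (Or.inr rfl)) with hba | hbb
    · have hab : a = b := by rw [hba, hA]
      exact ⟨hA.symm, (hcase hab).symm⟩
    · exact ⟨hA.symm, hbb⟩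

end AuxZF

/-! ### Layer 6: properties of canonical rank functions -/

section AuxCanExt

variable {N : SetStruct}

lemma canValUnique (hN : IsZF N) {t r y b b' : N.carrier} (hc : CanP N t r)
    (hyt : N.mem y t) (h1 : N.FunAt r y b) (h2 : N.FunAt r y b') : b = b' :=
  hN.ext b b' fun c => by
    rw [hc.2.2.2 y b ⟨hyt, h1⟩ c, hc.2.2.2 y b' ⟨hyt, h2⟩ c]

lemma canFunAtMem (hN : IsZF N) {t r y b : N.carrier} (hc : CanP N t r)
    (h : N.FunAt r y b) : N.mem y t := by
  obtain ⟨q, hq, hop⟩ := h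
  obtain ⟨y', b', hy't, hop'⟩ := hc.2.1 q hq
  obtain ⟨hy, hb⟩ := opairInj hN hop hop'
  exact hy ▸ hy't

lemma canGlobalUnique (hN : IsZF N) {t r y b b' : N.carrier} (hc : CanP N t r)
    (h1 : N.FunAt r y b) (h2 : N.FunAt r y b') : b = b' :=
  canValUnique hN hc (canFunAtMem hN hc h1) h1 h2

lemma canAgree (hN : IsZF N) {t r t' r' : N.carrier} (hc : CanP N t r) (hc' : CanP N t' r') :
    ∀ y, Acc N.mem y → N.mem y t → N.mem y t' →
      ∀ b b', N.FunAt r y b → N.FunAt r' y b' → b = b' := by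
  intro y hy
  induction hy with
  | intro y hmem ih =>
    intro hyt hyt' b b' hb hb'
    refine hN.ext b b' fun c => ?_
    rw [hc.2.2.2 y b ⟨hyt, hb⟩ c, hc'.2.2.2 y b' ⟨hyt', hb'⟩ c]
    constructor
    · rintro ⟨z, hz, d, hd, hcd⟩
      obtain ⟨d', hd'⟩ := hc'.2.2.1 z (hc'.1 y hyt' z hz)
      have he : d = d' := ih z hz (hc.1 y hyt z hz) (hc'.1 y hyt' z hz) d d' hd hd'
      exact ⟨z, hz, d', hd', he ▸ hcd⟩
    · rintro ⟨z, hz, d', hd', hcd⟩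
      obtain ⟨d, hd⟩ := hc.2.2.1 z (hc.1 y hyt z hz)
      have he : d = d' := ih z hz (hc.1 y hyt z hz) (hc'.1 y hyt' z hz) d d' hd hd'
      exact ⟨z, hz, d, hd, he ▸ hcd⟩

lemma canVal (hN : IsZF N) {t r : N.carrier} (hc : CanP N t r) :
    ∀ y, Acc N.mem y → N.mem y t →
      ∀ b, N.FunAt r y b → Acc N.mem b ∧ N.IsOrdinal b := by
  intro y hy
  induction hy with
  | intro y hmem ih =>
    intro hyt b hb
    have hchar := hc.2.2.2 y b ⟨hyt, hb⟩
    have hmemb : ∀ c, N.mem c b → Acc N.mem c ∧ N.IsOrdinal c := by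
      intro c hcb
      obtain ⟨z, hz, d, hd, hcd⟩ := (hchar c).1 hcb
      have hzt : N.mem z t := hc.1 y hyt z hz
      obtain ⟨hdacc, hdord⟩ := ih z hz hzt d hd
      rcases hcd with h | rfl
      · exact ⟨hdacc.inv h, memOrdinal hN hdord h⟩
      · exact ⟨hdacc, hdord⟩
    constructor
    · exact Acc.intro b fun c hcb => (hmemb c hcb).1
    · constructor
      · intro c hcb c' hc'
        obtain ⟨z, hz, d, hd, hcd⟩ := (hchar c).1 hcb
        have hc'd : N.mem c' d := by
          rcases hcd with h | rfl
          · obtain ⟨hdacc, hdord⟩ := ih z hz (hc.1 y hyt z hz) d hd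
            exact hdord.1 c h c' hc'
          · exact hc'
        exact (hchar c').2 ⟨z, hz, d, hd, Or.inl hc'd⟩
      · intro c c' hcb hc'b
        obtain ⟨hca, hco⟩ := hmemb c hcb
        obtain ⟨hc'a, hc'o⟩ := hmemb c' hc'b
        exact ordTrichotomy hN hco hc'o

end AuxCanExt

/-! ### Layer 7: existence of minimal canonically-ranked covers of accessible points -/

section AuxGood

variable {N : SetStruct}

lemma goodAt (hN : IsZF N) : ∀ x : N.carrier, Acc N.mem x →
    ∃ t r, CanP N t r ∧ N.mem x t ∧ (∀ z, N.mem z t → Acc N.mem z) ∧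
      (∀ z, N.mem z t → ∀ (hza : Acc N.mem z) (hxa : Acc N.mem x),
        accRank hza ≤ accRank hxa) ∧ MinP N t x := by
  intro x hx
  induction hx with
  | intro x hxmem ih =>
  classical
  have hax : Acc N.mem x := Acc.intro x hxmem
  choose t_ r_ hcan_ hmem_ hacc_ hrk_ hmin_ using ih
  have ne10 : (1:ℕ) ≠ 0 := by omega
  have ne20 : (2:ℕ) ≠ 0 := by omega
  have ne01 : (0:ℕ) ≠ 1 := by omega
  have ne12 : (1:ℕ) ≠ 2 := by omega
  -- collection
  obtain ⟨B, hB⟩ := hN.collection psiFml isFO_psi (fun _ => x) x (by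
    intro y hy
    obtain ⟨P, hP⟩ := mkOPair hN (t_ y hy) (r_ y hy)
    refine ⟨P, ?_⟩
    rw [sat_psi]
    simp only [Function.update_self, Function.update_of_ne ne01]
    exact ⟨t_ y hy, r_ y hy, hP, hcan_ y hy, hmem_ y hy, hmin_ y hy⟩)
  have hB' : ∀ y, N.mem y x → ∃ P, N.mem P B ∧ ∃ t r, N.IsOPair P t r ∧ CanP N t r ∧
      N.mem y t ∧ MinP N t y := by
    intro y hy
    obtain ⟨P, hPB, hsat⟩ := hB y hy
    rw [sat_psi] at hsat
    simp only [Function.update_self, Function.update_of_ne ne01] at hsat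
    obtain ⟨t, r, h1, h2, h3, h4⟩ := hsat
    exact ⟨P, hPB, t, r, h1, h2, h3, h4⟩
  -- the bounding set for the t/r parts
  obtain ⟨u1, hu1⟩ := hN.union B
  obtain ⟨u2, hu2⟩ := hN.union u1
  obtain ⟨u3, hu3⟩ := hN.union u2
  have hmemsingle : ∀ a : N.carrier, ∃ s, ∀ z, N.mem z s ↔ z = a := by
    intro a
    obtain ⟨s, hs⟩ := hN.pairing a a
    exact ⟨s, fun z => by rw [hs z, or_self]⟩
  have hUt : ∀ P t r, N.mem P B → N.IsOPair P t r →
      (∀ z, N.mem z t → N.mem z u3) ∧ (∀ q, N.mem q r → N.mem q u3) := by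
    intro P t r hPB hop
    obtain ⟨s2, hs2⟩ := hN.pairing t r
    have hs2P : N.mem s2 P := (hop s2).2 (Or.inr fun y => hs2 y)
    have hs2u1 : N.mem s2 u1 := (hu1 s2).2 ⟨P, hPB, hs2P⟩
    have htu2 : N.mem t u2 := (hu2 t).2 ⟨s2, hs2u1, (hs2 t).2 (Or.inl rfl)⟩
    have hru2 : N.mem r u2 := (hu2 r).2 ⟨s2, hs2u1, (hs2 r).2 (Or.inr rfl)⟩
    exact ⟨fun z hz => (hu3 z).2 ⟨t, htu2, hz⟩, fun q hq => (hu3 q).2 ⟨r, hru2, hq⟩⟩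
  set v0 : ℕ → N.carrier := Function.update (fun _ => x) 2 B with hv0
  have hv01 : v0 1 = x := Function.update_of_ne ne12 _ _
  have hv02 : v0 2 = B := Function.update_self _ _ _
  -- T1
  obtain ⟨T1, hT1⟩ := hN.separation sepTFml isFO_sepT v0 u3
  have hT1' : ∀ z, N.mem z T1 ↔ ∃ y, ∃ hy : N.mem y x, N.mem z (t_ y hy) := by
    intro z
    rw [hT1 z, sat_sepT, Function.update_self, Function.update_of_ne ne10,
      Function.update_of_ne ne20, hv01, hv02]
    constructor
    · rintro ⟨hzu3, P, hPB, y, hy, t, r, hop, hcant, hyt, hmint, hzt⟩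
      exact ⟨y, hy, hmint (t_ y hy) (r_ y hy) ⟨hcan_ y hy, hmem_ y hy⟩ z hzt⟩
    · rintro ⟨y, hy, hzt⟩
      obtain ⟨P, hPB, t, r, hop, hcant, hyt, hmint⟩ := hB' y hy
      have hzt' : N.mem z t := hmin_ y hy t r ⟨hcant, hyt⟩ z hzt
      exact ⟨(hUt P t r hPB hop).1 z hzt', P, hPB, y, hy, t, r, hop, hcant, hyt, hmint, hzt'⟩
  -- R1
  obtain ⟨R1, hR1⟩ := hN.separation sepRFml isFO_sepR v0 u3
  have hR1' : ∀ q, N.mem q R1 ↔ ∃ y, ∃ hy : N.mem y x, N.mem q (r_ y hy) := by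
    intro q
    rw [hR1 q, sat_sepR, Function.update_self, Function.update_of_ne ne10,
      Function.update_of_ne ne20, hv01, hv02]
    constructor
    · rintro ⟨hqu3, P, hPB, y, hy, t, r, hop, hcant, hyt, hmint, hqr⟩
      obtain ⟨w, b, hwt, hopq⟩ := hcant.2.1 q hqr
      have hwty : N.mem w (t_ y hy) := hmint (t_ y hy) (r_ y hy) ⟨hcan_ y hy, hmem_ y hy⟩ w hwt
      have hfw : N.FunAt r w b := ⟨q, hqr, hopq⟩
      obtain ⟨b2, hfb2⟩ := (hcan_ y hy).2.2.1 w hwty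
      have hacw : Acc N.mem w := hacc_ y hy w hwty
      have hbb2 : b = b2 := canAgree hN hcant (hcan_ y hy) w hacw hwt hwty b b2 hfw hfb2
      obtain ⟨q2, hq2, hopq2⟩ := hfb2
      have hopq2' : N.IsOPair q2 w b := by rw [hbb2]; exact hopq2
      have hqq2 : q = q2 := opairExt hN hopq hopq2'
      exact ⟨y, hy, by rw [hqq2]; exact hq2⟩
    · rintro ⟨y, hy, hqr⟩
      obtain ⟨P, hPB, t, r, hop, hcant, hyt, hmint⟩ := hB' y hy
      obtain ⟨w, b, hwt, hopq⟩ := (hcan_ y hy).2.1 q hqr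
      have hwt' : N.mem w t := hmin_ y hy t r ⟨hcant, hyt⟩ w hwt
      have hfw : N.FunAt (r_ y hy) w b := ⟨q, hqr, hopq⟩
      obtain ⟨b2, hfb2⟩ := hcant.2.2.1 w hwt'
      have hacw : Acc N.mem w := hacc_ y hy w hwt
      have hbb2 : b = b2 := canAgree hN (hcan_ y hy) hcant w hacw hwt hwt' b b2 hfw hfb2
      obtain ⟨q2, hq2, hopq2⟩ := hfb2
      have hopq2' : N.IsOPair q2 w b := by rw [hbb2]; exact hopq2
      have hqq2 : q = q2 := opairExt hN hopq hopq2'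
      have hqr' : N.mem q r := by rw [hqq2]; exact hq2
      exact ⟨(hUt P t r hPB hop).2 q hqr', P, hPB, y, hy, t, r, hop, hcant, hyt, hmint, hqr'⟩
  have hFunR1 : ∀ z d, N.FunAt R1 z d ↔ ∃ y, ∃ hy : N.mem y x, N.FunAt (r_ y hy) z d := by
    intro z d
    constructor
    · rintro ⟨q, hq, hop⟩
      obtain ⟨y, hy, hqr⟩ := (hR1' q).1 hq
      exact ⟨y, hy, q, hqr, hop⟩
    · rintro ⟨y, hy, q, hq, hop⟩
      exact ⟨q, (hR1' q).2 ⟨y, hy, hq⟩, hop⟩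
  -- the rank value at x
  obtain ⟨w1, hw1⟩ := hN.union R1
  obtain ⟨w2, hw2⟩ := hN.union w1
  obtain ⟨w3, hw3⟩ := hN.union w2
  obtain ⟨wp, hwp⟩ := hN.pairing w2 w3
  obtain ⟨W, hW⟩ := hN.union wp
  have hWmem : ∀ c, (N.mem c w2 ∨ N.mem c w3) → N.mem c W := by
    intro c h
    rcases h with h | h
    · exact (hW c).2 ⟨w2, (hwp w2).2 (Or.inl rfl), h⟩
    · exact (hW c).2 ⟨w3, (hwp w3).2 (Or.inr rfl), h⟩
  have hdW : ∀ z d, N.FunAt R1 z d → N.mem d w2 := by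
    rintro z d ⟨q, hq, hop⟩
    obtain ⟨s2, hs2⟩ := hN.pairing z d
    have hs2q : N.mem s2 q := (hop s2).2 (Or.inr fun y => hs2 y)
    exact (hw2 d).2 ⟨s2, (hw1 s2).2 ⟨q, hq, hs2q⟩, (hs2 d).2 (Or.inr rfl)⟩
  set v1 : ℕ → N.carrier := Function.update (fun _ => x) 2 R1 with hv1
  have hv11 : v1 1 = x := Function.update_of_ne ne12 _ _
  have hv12 : v1 2 = R1 := Function.update_self _ _ _
  obtain ⟨bx, hbx0⟩ := hN.separation sepBFml isFO_sepB v1 W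
  have hbx : ∀ c, N.mem c bx ↔ ∃ z, N.mem z x ∧ ∃ d, N.FunAt R1 z d ∧ (N.mem c d ∨ c = d) := by
    intro c
    rw [hbx0 c, sat_sepB, Function.update_self, Function.update_of_ne ne10,
      Function.update_of_ne ne20, hv11, hv12]
    constructor
    · rintro ⟨-, h⟩; exact h
    · rintro ⟨z, hz, d, hfd, hcd⟩
      refine ⟨?_, z, hz, d, hfd, hcd⟩
      have hdw2 := hdW z d hfd
      rcases hcd with h | rfl
      · exact hWmem c (Or.inr ((hw3 c).2 ⟨d, hdw2, h⟩))
      · exact hWmem c (Or.inl hdw2)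
  -- x is not among the collected covers
  have hxT1 : ¬ N.mem x T1 := by
    intro hmemx
    obtain ⟨y, hy, hxty⟩ := (hT1' x).1 hmemx
    have h1 : accRank hax ≤ accRank (hxmem y hy) := hrk_ y hy x hxty hax (hxmem y hy)
    have h2 : accRank (hxmem y hy) < accRank hax := by
      have h3 := accRank_lt hax hy
      rwa [accRank_irrel (hax.inv hy) (hxmem y hy)] at h3
    exact absurd h1 (not_le.mpr h2)
  -- assemble t_x and r_x
  obtain ⟨sx, hsx⟩ := hmemsingle x
  obtain ⟨tp, htp⟩ := hN.pairing T1 sx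
  obtain ⟨tx, htx0⟩ := hN.union tp
  have htx : ∀ z, N.mem z tx ↔ (N.mem z T1 ∨ z = x) := by
    intro z
    rw [htx0 z]
    constructor
    · rintro ⟨w, hw, hzw⟩
      rcases (htp w).1 hw with rfl | rfl
      · exact Or.inl hzw
      · exact Or.inr ((hsx z).1 hzw)
    · rintro (h | rfl)
      · exact ⟨T1, (htp T1).2 (Or.inl rfl), h⟩
      · exact ⟨sx, (htp sx).2 (Or.inr rfl), (hsx z).2 rfl⟩
  obtain ⟨px, hpx⟩ := mkOPair hN x bx
  obtain ⟨spx, hspx⟩ := hmemsingle px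
  obtain ⟨rp, hrp⟩ := hN.pairing R1 spx
  obtain ⟨rx, hrx0⟩ := hN.union rp
  have hrx : ∀ q, N.mem q rx ↔ (N.mem q R1 ∨ q = px) := by
    intro q
    rw [hrx0 q]
    constructor
    · rintro ⟨w, hw, hqw⟩
      rcases (hrp w).1 hw with rfl | rfl
      · exact Or.inl hqw
      · exact Or.inr ((hspx q).1 hqw)
    · rintro (h | rfl)
      · exact ⟨R1, (hrp R1).2 (Or.inl rfl), h⟩
      · exact ⟨spx, (hrp spx).2 (Or.inr rfl), (hspx q).2 rfl⟩
  have hFunRx : ∀ z d, N.FunAt rx z d ↔ (N.FunAt R1 z d ∨ (z = x ∧ d = bx)) := by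
    intro z d
    constructor
    · rintro ⟨q, hq, hop⟩
      rcases (hrx q).1 hq with h | rfl
      · exact Or.inl ⟨q, h, hop⟩
      · obtain ⟨h1, h2⟩ := opairInj hN hop hpx
        exact Or.inr ⟨h1, h2⟩
    · rintro (⟨q, hq, hop⟩ | ⟨rfl, rfl⟩)
      · exact ⟨q, (hrx q).2 (Or.inl hq), hop⟩
      · exact ⟨px, (hrx px).2 (Or.inr rfl), hpx⟩
  have hzInT1 : ∀ y (hy : N.mem y x), ∀ z, N.mem z (t_ y hy) → N.mem z T1 :=
    fun y hy z hz => (hT1' z).2 ⟨y, hy, hz⟩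
  have hFunRxT1 : ∀ z d, N.mem z T1 → (N.FunAt rx z d ↔ N.FunAt R1 z d) := by
    intro z d hz
    rw [hFunRx]
    constructor
    · rintro (h | ⟨rfl, -⟩)
      · exact h
      · exact absurd hz hxT1
    · exact Or.inl
  have hR1Val : ∀ y (hy : N.mem y x), ∀ z d, N.mem z (t_ y hy) → N.FunAt R1 z d →
      N.FunAt (r_ y hy) z d := by
    intro y hy z d hzt hfd
    obtain ⟨y2, hy2, hf2⟩ := (hFunR1 z d).1 hfd
    obtain ⟨d2, hd2⟩ := (hcan_ y hy).2.2.1 z hzt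
    have hz2 : N.mem z (t_ y2 hy2) := canFunAtMem hN (hcan_ y2 hy2) hf2
    have hdd2 : d = d2 :=
      canAgree hN (hcan_ y2 hy2) (hcan_ y hy) z (hacc_ y hy z hzt) hz2 hzt d d2 hf2 hd2
    rw [hdd2]; exact hd2
  -- final verification
  refine ⟨tx, rx, ⟨?_, ?_, ?_, ?_⟩, (htx x).2 (Or.inr rfl), ?_, ?_, ?_⟩
  · -- transitive
    intro y1 hy1 z hz
    rcases (htx y1).1 hy1 with h | rfl
    · obtain ⟨y, hy, hy1t⟩ := (hT1' y1).1 h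
      exact (htx z).2 (Or.inl (hzInT1 y hy z ((hcan_ y hy).1 y1 hy1t z hz)))
    · exact (htx z).2 (Or.inl (hzInT1 z hz z (hmem_ z hz)))
  · -- pairs over tx
    intro q hq
    rcases (hrx q).1 hq with h | rfl
    · obtain ⟨y, hy, hqr⟩ := (hR1' q).1 h
      obtain ⟨w, b, hwt, hop⟩ := (hcan_ y hy).2.1 q hqr
      exact ⟨w, b, (htx w).2 (Or.inl (hzInT1 y hy w hwt)), hop⟩
    · exact ⟨x, bx, (htx x).2 (Or.inr rfl), hpx⟩
  · -- totality
    intro y1 hy1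
    rcases (htx y1).1 hy1 with h | he
    case inr => exact ⟨bx, (hFunRx y1 bx).2 (Or.inr ⟨he, rfl⟩)⟩
    · obtain ⟨y, hy, hy1t⟩ := (hT1' y1).1 h
      obtain ⟨b, hfb⟩ := (hcan_ y hy).2.2.1 y1 hy1t
      exact ⟨b, (hFunRxT1 y1 b h).2 ((hFunR1 y1 b).2 ⟨y, hy, hfb⟩)⟩
  · -- canonicity
    rintro y1 b ⟨hy1, hfb⟩ c
    rcases (htx y1).1 hy1 with hy1T | he
    case inr =>
      have hbbx : b = bx := by
        rcases (hFunRx y1 b).1 hfb with h | ⟨-, h⟩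
        · obtain ⟨y, hy, hf⟩ := (hFunR1 y1 b).1 h
          exact absurd (he ▸ hzInT1 y hy y1 (canFunAtMem hN (hcan_ y hy) hf)) hxT1
        · exact h
      rw [hbbx, he, hbx c]
      constructor
      · rintro ⟨z, hz, d, hd, hcd⟩
        have hzT1 : N.mem z T1 := hzInT1 z hz z (hmem_ z hz)
        exact ⟨z, hz, d, (hFunRxT1 z d hzT1).2 hd, hcd⟩
      · rintro ⟨z, hz, d, hd, hcd⟩
        have hzT1 : N.mem z T1 := hzInT1 z hz z (hmem_ z hz)
        exact ⟨z, hz, d, (hFunRxT1 z d hzT1).1 hd, hcd⟩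
    · obtain ⟨y, hy, hy1t⟩ := (hT1' y1).1 hy1T
      have hfbR1 : N.FunAt R1 y1 b := (hFunRxT1 y1 b hy1T).1 hfb
      have hfby : N.FunAt (r_ y hy) y1 b := hR1Val y hy y1 b hy1t hfbR1
      rw [(hcan_ y hy).2.2.2 y1 b ⟨hy1t, hfby⟩ c]
      constructor
      · rintro ⟨z, hz, d, hd, hcd⟩
        have hzt : N.mem z (t_ y hy) := (hcan_ y hy).1 y1 hy1t z hz
        exact ⟨z, hz, d, (hFunRxT1 z d (hzInT1 y hy z hzt)).2 ((hFunR1 z d).2 ⟨y, hy, hd⟩), hcd⟩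
      · rintro ⟨z, hz, d, hd, hcd⟩
        have hzt : N.mem z (t_ y hy) := (hcan_ y hy).1 y1 hy1t z hz
        have hdR1 : N.FunAt R1 z d := (hFunRxT1 z d (hzInT1 y hy z hzt)).1 hd
        exact ⟨z, hz, d, hR1Val y hy z d hzt hdR1, hcd⟩
  · -- all accessible
    intro z hz
    rcases (htx z).1 hz with h | rfl
    · obtain ⟨y, hy, hzt⟩ := (hT1' z).1 h
      exact hacc_ y hy z hzt
    · exact hax
  · -- rank bound
    intro z hz hza hxa
    rcases (htx z).1 hz with h | rfl
    · obtain ⟨y, hy, hzt⟩ := (hT1' z).1 h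
      have h1 : accRank hza ≤ accRank (hxmem y hy) := hrk_ y hy z hzt hza (hxmem y hy)
      have h2 : accRank (hxmem y hy) < accRank hxa := by
        have h3 := accRank_lt hxa hy
        rwa [accRank_irrel (hxa.inv hy) (hxmem y hy)] at h3
      exact le_of_lt (lt_of_le_of_lt h1 h2)
    · exact le_of_eq (accRank_irrel hza hxa)
  · -- minimality
    rintro t' r' ⟨hc', hxt'⟩ z hz
    rcases (htx z).1 hz with h | rfl
    · obtain ⟨y, hy, hzt⟩ := (hT1' z).1 h
      exact hmin_ y hy t' r' ⟨hc', hc'.1 x hxt' y hy⟩ z hzt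
    · exact hxt'

end AuxGood

/-! ### Layer 8: the rank-initial-segment lemmas and the main theorem -/

section AuxMain

variable {N : SetStruct}

lemma inVstage_of_acc (hN : IsZF N) {o : N.carrier} (ho : N.IsOrdinal o)
    (hno : ¬ Acc N.mem o) {x : N.carrier} (hx : Acc N.mem x) : N.InVstage x o := by
  obtain ⟨t, r, hcan, hxt, hallacc, -, -⟩ := goodAt hN x hx
  refine ⟨t, r, hcan.1, hxt, ?_, ?_, ?_⟩
  · intro y hyt
    obtain ⟨b, hfb⟩ := hcan.2.2.1 y hyt
    obtain ⟨hbacc, hbord⟩ := canVal hN hcan y (hallacc y hyt) hyt b hfb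
    exact ⟨b, accOrdMemIllOrd hN hbord hbacc ho hno, hfb⟩
  · intro y b b' h1 h2
    exact canGlobalUnique hN hcan h1 h2
  · intro y z b c hyt hzy hfy hfz
    exact (hcan.2.2.2 y b ⟨hyt, hfy⟩ c).2 ⟨z, hzy, c, hfz, Or.inr rfl⟩

lemma accOfStage {a o : N.carrier} (hin : N.InVstage a o) (hao : Acc N.mem o) :
    Acc N.mem a := by
  obtain ⟨t, r, htr, hat, h3, h4, h5⟩ := hin
  have key : ∀ b, Acc N.mem b → ∀ y, N.mem y t → N.FunAt r y b → Acc N.mem y := by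
    intro b hb
    induction hb with
    | intro b hbm ih =>
      intro y hyt hfy
      refine Acc.intro y fun z hz => ?_
      have hzt := htr y hyt z hz
      obtain ⟨c, hco, hfz⟩ := h3 z hzt
      exact ih c (h5 y z b c hyt hz hfy hfz) z hzt hfz
  obtain ⟨b, hbo, hfa⟩ := h3 a hat
  exact key b (hao.inv hbo) a hat hfa

end AuxMain

/-- a nonstandard model `M` of ZF rank-extended by a model `N` of ZF has
the same well-founded part as `N` (here `M` is the submodel of `N` with domain `D`). -/
theorem rank_extension_same_wfpart (N : SetStruct) (hN : IsZF N)
    (D : Set N.carrier) (hM : IsZF (N.restrict D))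
    (hMns : (N.restrict D).Nonstandard)
    (hrank : ∀ x, x ∉ D → ∀ m ∈ D, N.rankLt m x) :
    ∀ x : N.carrier, Acc N.mem x ↔ ∃ hx : x ∈ D, Acc (N.restrict D).mem ⟨x, hx⟩ := by
  have hdc : ∀ x, x ∈ D → ∀ y, N.mem y x → y ∈ D := by
    intro x hx y hy
    by_contra hyD
    obtain ⟨o, ho, hin, hnin⟩ := hrank y hyD x hx
    obtain ⟨t, r, htr, hxt, h3, h4, h5⟩ := hin
    exact hnin ⟨t, r, htr, htr x hxt y hy, h3, h4, h5⟩
  have liftAcc : ∀ x : N.carrier, Acc N.mem x → ∀ hx : x ∈ D,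
      Acc (N.restrict D).mem ⟨x, hx⟩ := by
    intro x hx
    induction hx with
    | intro x hm ih =>
      intro hxD
      exact Acc.intro _ fun y hy => ih y.1 hy y.2
  have downAcc : ∀ p : (N.restrict D).carrier, Acc (N.restrict D).mem p → Acc N.mem p.1 := by
    intro p hp
    induction hp with
    | intro p hm ih =>
      refine Acc.intro _ fun y hy => ?_
      exact ih ⟨y, hdc p.1 p.2 y hy⟩ hy
  intro x
  constructor
  · intro hAcc
    have hxD : x ∈ D := by
      by_contra hxD
      obtain ⟨a0, hna⟩ := hMns
      have hnaN : ¬ Acc N.mem a0.1 := fun h => hna (liftAcc a0.1 h a0.2)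
      obtain ⟨o, ho, hin, hnin⟩ := hrank x hxD a0.1 a0.2
      have hnoAcc : ¬ Acc N.mem o := fun h => hnaN (accOfStage hin h)
      exact hnin (inVstage_of_acc hN ho hnoAcc hAcc)
    exact ⟨hxD, liftAcc x hAcc hxD⟩
  · rintro ⟨hxD, hAcc⟩
    exact downAcc ⟨x, hxD⟩ hAcc
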